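/- arXiv:1405.6105 — 6 statements merged into one kernel-verified Lean document; each statement's English description precedes it below -/
import Mathlib

section
/- Let k ⊆ K be fields and let K[s] be the polynomial ring in one variable s over K, graded so that s is homogeneous of degree 1. Suppose R ⊆ K[s] is a homogeneous subring (i.e., the ℤ-grading of K[s] restricts to R) with k ⊆ R and R ⊄ K. Let L = frac(R) ∩ K, let L̂ be the algebraic closure of L and K̂ the algebraic closure of K (with L̂ ⊆ K̂). Then there exist an element c ∈ K̂ and an integer d ≥ 1 such that R ⊆ L̂[c·s^d] and L̂[c·s^d] is algebraic over R (every element of L̂[c·s^d] satisfies a nonzero polynomial with coefficients in R). -/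
/-!
Pick a monomial `a₀ s^n₀ ∈ R` with `a₀ ≠ 0`, `n₀ ≥ 1`, and `c ∈ K̂` with `c^n₀ = a₀`; then
`d = 1` works. A monomial `a s^n ∈ R` equals `(a / c^n) (c s)^n`, and `a / c^n ∈ L̂` since its
`n₀`-th power is `a^n₀ / a₀^n = (a s^n)^n₀ / (a₀ s^n₀)^n ∈ L`; by homogeneity `R ⊆ L̂[c s]`.
Conversely `(c s)^n₀ = a₀ s^n₀ ∈ R`, each `b ∈ L` is a quotient of elements of `R`, and a root of
a polynomial with coefficients algebraic over `R` is algebraic over `R`; as the elements algebraic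
over `R` form a ring, all of `L̂[c s]` is algebraic over `R`.
-/

open Polynomial

attribute [local instance] Polynomial.algebra

theorem IsAlgebraic.of_eval_eq_zero_of_forall_coeff {R S : Type*} [CommRing R] [IsDomain R]
    [CommRing S] [IsDomain S] [Algebra R S] {p : S[X]} (hp : p ≠ 0)
    (hcoeff : ∀ i, IsAlgebraic R (p.coeff i)) {z : S} (hz : p.eval z = 0) :
    IsAlgebraic R z := by
  obtain ⟨q, hq⟩ : p ∈ lifts (algebraMap (Subalgebra.algebraicClosure R S) S) :=
    (lifts_iff_coeff_lifts p).2 fun i => ⟨⟨_, hcoeff i⟩, rfl⟩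
  rw [coe_mapRingHom] at hq
  refine IsAlgebraic.restrictScalars R ⟨q, ?_, ?_⟩
  · rintro rfl
    exact hp (by rw [← hq, Polynomial.map_zero])
  · rw [aeval_def, ← eval_map, hq, hz]

theorem IsAlgebraic.exists_eval₂_eq_zero_of_subring {A B : Type*} [CommRing A] [CommRing B]
    [Algebra A B] {R : Subring A} {y : B} (hy : IsAlgebraic R y) :
    ∃ p : A[X], p ≠ 0 ∧ (∀ i, p.coeff i ∈ R) ∧ p.eval₂ (algebraMap A B) y = 0 := by
  obtain ⟨p, hp, hpy⟩ := hy
  refine ⟨p.map R.subtype, (Polynomial.map_ne_zero_iff R.subtype_injective).2 hp,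
    fun i => by simp [coeff_map], ?_⟩
  rw [eval₂_map]
  exact hpy

namespace Polynomial

theorem algebraMap_subring_apply {A B : Type*} [CommRing A] [CommRing B] [Algebra A B]
    {R : Subring A[X]} (p : R) : algebraMap R B[X] p = (p : A[X]).map (algebraMap A B) :=
  rfl

variable {K : Type*} [Field K] (R : Subring K[X])

/-- The field `L = frac(R) ∩ K`. -/
def fracConst : Set K :=
  {b | ∃ p ∈ R, ∃ p' ∈ R, p' ≠ 0 ∧ C b * p' = p}

/-- `L̂`, as the elements of `K̂ = AlgebraicClosure K` algebraic over `L`. -/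
def fracConstAlgClosure : Set (AlgebraicClosure K) :=
  {x | ∃ q : K[X], q ≠ 0 ∧ (∀ i, q.coeff i ∈ fracConst R) ∧ aeval x q = 0}

/-- `L̂[c s]`. -/
noncomputable def adjoinMonomial (c : AlgebraicClosure K) : Subring (AlgebraicClosure K)[X] :=
  Subring.closure (C '' fracConstAlgClosure R ∪ {C c * X})

variable {R}

theorem zero_mem_fracConst : (0 : K) ∈ fracConst R :=
  ⟨0, R.zero_mem, 1, R.one_mem, one_ne_zero, by simp⟩

theorem one_mem_fracConst : (1 : K) ∈ fracConst R :=
  ⟨1, R.one_mem, 1, R.one_mem, one_ne_zero, by simp⟩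

theorem sub_mem_fracConst {b₁ b₂ : K} (h₁ : b₁ ∈ fracConst R) (h₂ : b₂ ∈ fracConst R) :
    b₁ - b₂ ∈ fracConst R := by
  obtain ⟨p₁, hp₁, p₁', hp₁', hp₁'0, rfl⟩ := h₁
  obtain ⟨p₂, hp₂, p₂', hp₂', hp₂'0, rfl⟩ := h₂
  refine ⟨C b₁ * p₁' * p₂' - C b₂ * p₂' * p₁',
    R.sub_mem (R.mul_mem hp₁ hp₂') (R.mul_mem hp₂ hp₁'), p₁' * p₂', R.mul_mem hp₁' hp₂',
    mul_ne_zero hp₁'0 hp₂'0, ?_⟩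
  rw [C_sub]
  ring

theorem mem_fracConstAlgClosure_of_pow_eq {x : AlgebraicClosure K} {m : ℕ} (hm : m ≠ 0)
    {b : K} (hb : b ∈ fracConst R) (hx : x ^ m = algebraMap K _ b) :
    x ∈ fracConstAlgClosure R := by
  refine ⟨X ^ m - C b, X_pow_sub_C_ne_zero (Nat.pos_of_ne_zero hm) b, fun i => ?_, ?_⟩
  · rw [coeff_sub, coeff_X_pow, coeff_C]
    exact sub_mem_fracConst
      (by split_ifs <;> first | exact one_mem_fracConst | exact zero_mem_fracConst)
      (by split_ifs <;> first | exact hb | exact zero_mem_fracConst)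
  · simp [hx]

theorem div_pow_mem_fracConst {n₀ n : ℕ} {a₀ a : K} (ha₀ : a₀ ≠ 0)
    (hm₀ : monomial n₀ a₀ ∈ R) (hm : monomial n a ∈ R) :
    a ^ n₀ / a₀ ^ n ∈ fracConst R := by
  refine ⟨_, pow_mem hm n₀, _, pow_mem hm₀ n, by simp [monomial_pow, ha₀], ?_⟩
  rw [monomial_pow, monomial_pow, C_mul_monomial, div_mul_cancel₀ _ (pow_ne_zero n ha₀),
    mul_comm]

theorem map_monomial_mem_adjoinMonomial {n₀ n : ℕ} {a₀ a : K} {c : AlgebraicClosure K}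
    (hn₀ : n₀ ≠ 0) (ha₀ : a₀ ≠ 0) (hm₀ : monomial n₀ a₀ ∈ R)
    (hc : c ^ n₀ = algebraMap K _ a₀) (hm : monomial n a ∈ R) :
    (monomial n a).map (algebraMap K (AlgebraicClosure K)) ∈ adjoinMonomial R c := by
  have hc0 : c ≠ 0 := by
    rintro rfl
    exact ha₀ ((map_eq_zero _).1 (by rw [← hc, zero_pow hn₀]))
  set φ := algebraMap K (AlgebraicClosure K)
  have hcoeff : φ a / c ^ n ∈ fracConstAlgClosure R := by
    refine mem_fracConstAlgClosure_of_pow_eq hn₀ (div_pow_mem_fracConst ha₀ hm₀ hm) ?_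
    rw [div_pow, ← pow_mul, mul_comm, pow_mul, hc, map_div₀, map_pow, map_pow]
  have hsplit : (monomial n a).map φ = C (φ a / c ^ n) * (C c * X) ^ n := by
    rw [map_monomial, mul_pow, ← C_pow, ← mul_assoc, ← C_mul,
      div_mul_cancel₀ _ (pow_ne_zero n hc0), C_mul_X_pow_eq_monomial]
  rw [hsplit]
  exact mul_mem (Subring.subset_closure (.inl ⟨_, hcoeff, rfl⟩))
    (pow_mem (Subring.subset_closure (.inr rfl)) n)

theorem map_mem_adjoinMonomial (hhom : ∀ r ∈ R, ∀ i, monomial i (r.coeff i) ∈ R)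
    {n₀ : ℕ} {a₀ : K} {c : AlgebraicClosure K}
    (hn₀ : n₀ ≠ 0) (ha₀ : a₀ ≠ 0) (hm₀ : monomial n₀ a₀ ∈ R)
    (hc : c ^ n₀ = algebraMap K _ a₀) {r : K[X]} (hr : r ∈ R) :
    r.map (algebraMap K (AlgebraicClosure K)) ∈ adjoinMonomial R c := by
  rw [as_sum_support r, Polynomial.map_sum]
  exact Subring.sum_mem _ fun i _ =>
    map_monomial_mem_adjoinMonomial hn₀ ha₀ hm₀ hc (hhom r hr i)

theorem isAlgebraic_C_algebraMap_of_mem_fracConst {b : K} (hb : b ∈ fracConst R) :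
    IsAlgebraic R (C (algebraMap K (AlgebraicClosure K) b)) := by
  obtain ⟨p, hp, p', hp', hp'0, hbp⟩ := hb
  refine IsAlgebraic.of_mul (y := algebraMap R _ ⟨p', hp'⟩) ?_ (isAlgebraic_algebraMap _) ?_
  · exact mem_nonZeroDivisors_of_ne_zero (by simpa [algebraMap_subring_apply] using hp'0)
  · have hmul : algebraMap R _ ⟨p', hp'⟩ * C (algebraMap K (AlgebraicClosure K) b) =
        algebraMap R (AlgebraicClosure K)[X] ⟨p, hp⟩ := by
      simp [algebraMap_subring_apply, ← hbp, mul_comm]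
    rw [hmul]
    exact isAlgebraic_algebraMap _

theorem isAlgebraic_C_of_mem_fracConstAlgClosure {x : AlgebraicClosure K}
    (hx : x ∈ fracConstAlgClosure R) : IsAlgebraic R (C x) := by
  obtain ⟨q, hq, hqL, hqx⟩ := hx
  refine IsAlgebraic.of_eval_eq_zero_of_forall_coeff (p := q.map (algebraMap K _))
    ?_ (fun i => ?_) ?_
  · exact (Polynomial.map_ne_zero_iff (algebraMap K _).injective).2 hq
  · rw [coeff_map, Polynomial.algebraMap_apply]
    exact isAlgebraic_C_algebraMap_of_mem_fracConst (hqL i)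
  · rw [eval_map_algebraMap, ← Polynomial.algebraMap_eq, aeval_algebraMap_apply, hqx, map_zero]

theorem isAlgebraic_of_mem_adjoinMonomial {n₀ : ℕ} {a₀ : K} {c : AlgebraicClosure K}
    (hn₀ : n₀ ≠ 0) (hm₀ : monomial n₀ a₀ ∈ R) (hc : c ^ n₀ = algebraMap K _ a₀)
    {y : (AlgebraicClosure K)[X]} (hy : y ∈ adjoinMonomial R c) : IsAlgebraic R y := by
  refine (Subring.closure_le (t := (Subalgebra.algebraicClosure R _).toSubring)).2 ?_ hy
  rintro _ (⟨x, hx, rfl⟩ | rfl)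
  · exact isAlgebraic_C_of_mem_fracConstAlgClosure hx
  · refine IsAlgebraic.of_pow (Nat.pos_of_ne_zero hn₀) ?_
    convert isAlgebraic_algebraMap (R := R) (A := (AlgebraicClosure K)[X]) ⟨_, hm₀⟩
    simp [algebraMap_subring_apply, mul_pow, hc, ← C_pow, C_mul_X_pow_eq_monomial]

theorem exists_monomial_mem_of_notMem_range_C
    (hhom : ∀ r ∈ R, ∀ i, monomial i (r.coeff i) ∈ R)
    (hnc : ∃ r ∈ R, r ∉ Set.range (C : K → K[X])) :
    ∃ n a, n ≠ 0 ∧ a ≠ 0 ∧ monomial n a ∈ R := by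
  obtain ⟨r, hr, hrC⟩ := hnc
  have hr0 : r ≠ 0 := by rintro rfl; exact hrC ⟨0, C_0⟩
  exact ⟨r.natDegree, r.leadingCoeff, fun h => hrC (natDegree_eq_zero.1 h),
    leadingCoeff_ne_zero.2 hr0, hhom r hr _⟩

end Polynomial

/-- Let `k ⊆ K` be fields and `K[s]` the polynomial ring, graded with `s` of degree one.
Let `R ⊆ K[s]` be a homogeneous subring containing `k` with `R ⊄ K`.  Let
`L = frac(R) ∩ K` and let `L̂ ⊆ K̂` be the algebraic closures of `L` and `K`.  Then there
are `c ∈ K̂` and an integer `d ≥ 1` with `R ⊆ L̂[c·s^d]`, and `L̂[c·s^d]` is algebraic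
over `R`.  (Here `L̂` is realized inside `K̂ = AlgebraicClosure K` as the set of elements
algebraic over `L`, and everything is compared inside `K̂[s]`.) -/
theorem homogeneous_subring_in_algebraic_extension (k K : Type*) [Field k] [Field K]
    [Algebra k K] (R : Subalgebra k (Polynomial K))
    (hhom : ∀ r ∈ R, ∀ i : ℕ, (Polynomial.monomial i (r.coeff i) : Polynomial K) ∈ R)
    (hnc : ∃ r ∈ R, r ∉ Set.range (Polynomial.C : K → Polynomial K)) :
    ∃ (c : AlgebraicClosure K) (d : ℕ), 1 ≤ d ∧
      ∀ T : Subring (Polynomial (AlgebraicClosure K)),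
        T = Subring.closure
            ((Polynomial.C '' {x : AlgebraicClosure K |
                ∃ q : Polynomial K, q ≠ 0 ∧
                  (∀ i : ℕ, ∃ p ∈ R, ∃ p' ∈ R, p' ≠ 0 ∧
                    Polynomial.C (q.coeff i) * p' = p) ∧
                  Polynomial.aeval x q = 0})
              ∪ {Polynomial.C c * Polynomial.X ^ d}) →
        (∀ r ∈ R, r.map (algebraMap K (AlgebraicClosure K)) ∈ T) ∧
        (∀ y ∈ T, ∃ p : Polynomial (Polynomial K), p ≠ 0 ∧ (∀ i : ℕ, p.coeff i ∈ R) ∧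
          Polynomial.eval₂ (Polynomial.mapRingHom (algebraMap K (AlgebraicClosure K))) y p
            = 0) := by
  obtain ⟨n₀, a₀, hn₀, ha₀, hm₀⟩ :=
    exists_monomial_mem_of_notMem_range_C (R := R.toSubring) hhom hnc
  obtain ⟨c, hc⟩ := IsAlgClosed.exists_pow_nat_eq (algebraMap K (AlgebraicClosure K) a₀)
    (Nat.pos_of_ne_zero hn₀)
  refine ⟨c, 1, le_rfl, fun T hT => ?_⟩
  rw [pow_one] at hT
  change T = adjoinMonomial R.toSubring c at hT
  subst hT
  exact ⟨fun r hr => map_mem_adjoinMonomial hhom hn₀ ha₀ hm₀ hc hr, fun y hy =>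
    (isAlgebraic_of_mem_adjoinMonomial hn₀ hm₀ hc hy).exists_eval₂_eq_zero_of_subring⟩
end

section
/- (Nowicki) Let k be a field and A a commutative k-algebra. Then for any field extension L of k, A is finitely generated as a k-algebra if and only if L ⊗_k A is finitely generated as an L-algebra. -/
/-- (Nowicki)  Let `k` be a field and `A` a commutative `k`-algebra.  Then, for any field
extension `L/k`, `A` is finitely generated over `k` if and only if `L ⊗ₖ A` is finitely
generated over `L`. -/
theorem finiteType_iff_finiteType_baseChange (k : Type*) [Field k]
    (A : Type*) [CommRing A] [Algebra k A] (L : Type*) [Field L] [Algebra k L] :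
    Algebra.FiniteType k A ↔ Algebra.FiniteType L (TensorProduct k L A) :=
  ⟨fun _ ↦ inferInstance, fun _ ↦ .of_finiteType_tensorProduct_of_faithfullyFlat L⟩
end

section
/- Let k ⊆ K be fields and let K[s] be the polynomial ring in one variable over K. Let r_1, …, r_m ∈ K[s] be nonzero, and grade the polynomial ring k[x_1,…,x_m] by assigning to x_i the degree deg(r_i). Suppose h ∈ k[x_1,…,x_m] is nonzero with h(r_1,…,r_m) = 0, and let H be the highest-degree homogeneous summand of h with respect to this weighted grading. Then H(r̄_1,…,r̄_m) = 0, where r̄_i denotes the leading form of r_i. In particular, if r_1,…,r_m are algebraically dependent over k, then so are r̄_1,…,r̄_m. -/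
/-!
Expand `h(r_1,…,r_m)` monomial by monomial. Over a domain the monomial `x^d` evaluates at `r` to a
polynomial of degree exactly the weight of `d`, whose leading form is the evaluation of `x^d` at the
leading forms. So the coefficient of `s^D` in `h(r)`, for `D` the weighted degree of `h`, collects
precisely the leading forms of the top-weight monomials: `H(r̄) = c s^D` with `c` the coefficient of
`s^D` in `h(r) = 0`. As `H ≠ 0`, this is an algebraic relation among the `r̄_i`.
-/

open Polynomial MvPolynomial

namespace Polynomial

variable {R : Type*} [CommSemiring R] [NoZeroDivisors R]

noncomputable def leadingFormHom : R[X] →* R[X] where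
  toFun p := C p.leadingCoeff * X ^ p.natDegree
  map_one' := by simp
  map_mul' p q := by
    by_cases hp : p = 0
    · simp [hp]
    by_cases hq : q = 0
    · simp [hq]
    rw [leadingCoeff_mul, natDegree_mul hp hq, C_mul, pow_add]
    ring

theorem leadingFormHom_apply (p : R[X]) :
    leadingFormHom p = C p.leadingCoeff * X ^ p.natDegree :=
  rfl

theorem monomial_coeff_of_natDegree_le {p : R[X]} {D : ℕ} (hp : p.natDegree ≤ D) :
    monomial D (p.coeff D) = if p.natDegree = D then leadingFormHom p else 0 := by
  split_ifs with hD
  · rw [leadingFormHom_apply, C_mul_X_pow_eq_monomial, ← hD, coeff_natDegree]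
  · rw [coeff_eq_zero_of_natDegree_lt (lt_of_le_of_ne hp hD), map_zero]

end Polynomial

namespace MvPolynomial

theorem weightedHomogeneousComponent_weightedTotalDegree_ne_zero {σ R M : Type*}
    [CommSemiring R] [AddCommMonoid M] [LinearOrder M] [OrderBot M] (w : σ → M)
    {h : MvPolynomial σ R} (hh : h ≠ 0) :
    weightedHomogeneousComponent w (weightedTotalDegree w h) h ≠ 0 := by
  classical
  obtain ⟨d, hd, hdeg⟩ : ∃ d ∈ h.support, weightedTotalDegree w h = Finsupp.weight w d :=
    Finset.exists_mem_eq_sup h.support (support_nonempty.mpr hh) _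
  refine ne_zero_iff.mpr ⟨d, ?_⟩
  rw [coeff_weightedHomogeneousComponent, if_pos hdeg.symm]
  exact mem_support_iff.mp hd

variable {σ k K : Type*} [CommSemiring k] [CommSemiring K] [NoZeroDivisors K] [Algebra k K]
  {r : σ → K[X]}

theorem natDegree_finsuppProd_pow (hr : ∀ i, r i ≠ 0) (d : σ →₀ ℕ) :
    (d.prod fun i n => r i ^ n).natDegree = Finsupp.weight (fun i => (r i).natDegree) d := by
  rw [Finsupp.prod, natDegree_prod _ _ fun i _ => pow_ne_zero _ (hr i), Finsupp.weight_apply,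
    Finsupp.sum]
  simp only [natDegree_pow, smul_eq_mul]

theorem monomial_coeff_aeval_monomial (hr : ∀ i, r i ≠ 0) {D : ℕ} {d : σ →₀ ℕ}
    (hd : Finsupp.weight (fun i => (r i).natDegree) d ≤ D) (c : k) :
    Polynomial.monomial D ((aeval r (MvPolynomial.monomial d c)).coeff D) =
      if Finsupp.weight (fun i => (r i).natDegree) d = D then
        aeval (fun i => leadingFormHom (r i)) (MvPolynomial.monomial d c)
      else 0 := by
  have hprod : (d.prod fun i n => leadingFormHom (r i) ^ n) =
      leadingFormHom (d.prod fun i n => r i ^ n) := by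
    simp only [map_finsuppProd, map_pow]
  rw [aeval_monomial, aeval_monomial, hprod, Polynomial.algebraMap_apply, Polynomial.coeff_C_mul,
    ← Polynomial.C_mul_monomial,
    monomial_coeff_of_natDegree_le (natDegree_finsuppProd_pow hr d ▸ hd),
    natDegree_finsuppProd_pow hr d, mul_ite, mul_zero]

theorem aeval_leadingFormHom_weightedHomogeneousComponent (hr : ∀ i, r i ≠ 0)
    (h : MvPolynomial σ k) :
    aeval (fun i => leadingFormHom (r i))
        (weightedHomogeneousComponent (fun i => (r i).natDegree)
          (weightedTotalDegree (fun i => (r i).natDegree) h) h) =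
      Polynomial.monomial (weightedTotalDegree (fun i => (r i).natDegree) h)
        ((aeval r h).coeff (weightedTotalDegree (fun i => (r i).natDegree) h)) := by
  classical
  rw [congrArg (aeval r) h.as_sum, map_sum, finsetSum_coeff, map_sum]
  rw [weightedHomogeneousComponent_apply, map_sum, Finset.sum_filter]
  refine Finset.sum_congr rfl fun d hd => ?_
  exact (monomial_coeff_aeval_monomial hr (le_weightedTotalDegree _ hd) (h.coeff d)).symm

end MvPolynomial

/-- Let `k ⊆ K` be fields and `r_1,…,r_m ∈ K[s]` nonzero.  Grade `k[x_1,…,x_m]` by letting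
`x_i` have weight `deg r_i`.  If `h ≠ 0` satisfies `h(r_1,…,r_m) = 0` and `H` is the
highest-degree weighted-homogeneous summand of `h`, then `H(r̄_1,…,r̄_m) = 0`, where `r̄_i`
is the leading form of `r_i`.  In particular `r̄_1,…,r̄_m` are algebraically dependent
over `k`. -/
theorem leadingForms_algebraically_dependent (k K : Type*) [Field k] [Field K] [Algebra k K]
    (m : ℕ) (r : Fin m → Polynomial K) (hr : ∀ i, r i ≠ 0)
    (h : MvPolynomial (Fin m) k) (hh : h ≠ 0)
    (hrel : MvPolynomial.aeval r h = 0) :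
    MvPolynomial.aeval
        (fun i => (Polynomial.C (r i).leadingCoeff * Polynomial.X ^ (r i).natDegree :
          Polynomial K))
        (MvPolynomial.weightedHomogeneousComponent (fun i => (r i).natDegree)
          (MvPolynomial.weightedTotalDegree (fun i => (r i).natDegree) h) h) = 0
      ∧ ¬ AlgebraicIndependent k
          (fun i => (Polynomial.C (r i).leadingCoeff * Polynomial.X ^ (r i).natDegree :
            Polynomial K)) := by
  have htop : aeval (fun i => leadingFormHom (r i))
      (weightedHomogeneousComponent (fun i => (r i).natDegree)
        (weightedTotalDegree (fun i => (r i).natDegree) h) h) = 0 := by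
    rw [aeval_leadingFormHom_weightedHomogeneousComponent hr, hrel, Polynomial.coeff_zero,
      map_zero]
  exact ⟨htop, fun hind => weightedHomogeneousComponent_weightedTotalDegree_ne_zero _ hh
    (hind.eq_zero_of_aeval_eq_zero _ htop)⟩
end

section
/- Let k be an algebraically closed field, let K be a field containing k, and let K[s] be the polynomial ring in one variable over K. Suppose u, v ∈ K[s] are nonzero with deg u = deg v ≥ 1, and suppose u and v are algebraically dependent over k. Then there exist α, β ∈ k, not both zero, such that deg(αu + βv) < deg v. -/
/-!
Let `P ≠ 0` with `P(u, v) = 0`, of total degree `D`, and let `a, b` be the leading coefficients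
of `u, v`, of common degree `n > 0`. The coefficient of `s ^ (D * n)` in `P(u, v)` is `P_D(a, b)`,
where `P_D` is the top homogeneous component of `P`; so `P_D(a, b) = b ^ D * P_D(a / b, 1) = 0`
and `a / b` is a root of the nonzero polynomial `P_D(X, 1)`. Thus `a / b` is algebraic over the
algebraically closed field `k`, i.e. `a / b = c ∈ k`, and `u - c v` has degree `< n`.
-/

open Polynomial

namespace Polynomial

variable {σ A : Type*} [CommSemiring A]

theorem natDegree_prod_pow_le (f : σ → A[X]) (e : σ → ℕ) (s : Finset σ) {n : ℕ}
    (hf : ∀ i, (f i).natDegree ≤ n) :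
    (∏ i ∈ s, f i ^ e i).natDegree ≤ (∑ i ∈ s, e i) * n := by
  refine (natDegree_prod_le _ _).trans ?_
  rw [Finset.sum_mul]
  exact Finset.sum_le_sum fun j _ => natDegree_pow_le_of_le _ (hf j)

theorem coeff_prod_pow_of_natDegree_le (f : σ → A[X]) (e : σ → ℕ) (s : Finset σ) {n : ℕ}
    (hf : ∀ i, (f i).natDegree ≤ n) :
    (∏ i ∈ s, f i ^ e i).coeff ((∑ i ∈ s, e i) * n) = ∏ i ∈ s, (f i).coeff n ^ e i := by
  induction s using Finset.cons_induction with
  | empty => simp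
  | cons i s hi ih =>
    rw [Finset.prod_cons, Finset.sum_cons, Finset.prod_cons, add_mul,
      coeff_mul_add_eq_of_natDegree_le (natDegree_pow_le_of_le _ (hf i))
        (natDegree_prod_pow_le f e s hf), coeff_pow_of_natDegree_le (hf i), ih]

theorem degree_sub_C_div_leadingCoeff_mul_lt {K : Type*} [Field K] {u v : K[X]} (hu : u ≠ 0)
    (hdeg : u.degree = v.degree) :
    (u - C (u.leadingCoeff / v.leadingCoeff) * v).degree < v.degree := by
  have hv : v ≠ 0 := fun h => hu (degree_eq_bot.mp (by rw [hdeg, h, degree_zero]))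
  rw [← hdeg]
  refine degree_sub_lt_left ?_ hu ?_
  · rw [hdeg, degree_C_mul (by simp [hu, hv])]
  · simp [leadingCoeff_ne_zero.mpr hv]

end Polynomial

namespace MvPolynomial

variable {σ R : Type*} [CommSemiring R]

theorem coeff_aeval_eq_aeval_homogeneousComponent {A : Type*} [CommSemiring A] [Algebra R A]
    (f : σ → A[X]) {n D : ℕ} (hn : 0 < n) (hf : ∀ i, (f i).natDegree ≤ n)
    {P : MvPolynomial σ R} (hP : P.totalDegree ≤ D) :
    (aeval f P).coeff (D * n) = aeval (fun i => (f i).coeff n) (homogeneousComponent D P) := by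
  conv_lhs => rw [P.as_sum]
  rw [homogeneousComponent_apply, map_sum, map_sum, finsetSum_coeff, Finset.sum_filter]
  refine Finset.sum_congr rfl fun d hd => ?_
  simp only [aeval_monomial, Polynomial.algebraMap_apply, Polynomial.coeff_C_mul, Finsupp.prod]
  split_ifs with hdD
  · rw [← hdD, Finsupp.degree_apply, coeff_prod_pow_of_natDegree_le _ _ _ hf]
  · have hdD : d.degree < D := lt_of_le_of_ne ((le_totalDegree hd).trans hP) hdD
    rw [coeff_eq_zero_of_natDegree_lt, mul_zero]
    exact (natDegree_prod_pow_le _ _ _ hf).trans_lt (Nat.mul_lt_mul_of_pos_right hdD hn)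

theorem homogeneousComponent_totalDegree_ne_zero {P : MvPolynomial σ R} (hP : P ≠ 0) :
    homogeneousComponent P.totalDegree P ≠ 0 := by
  obtain ⟨d, hd, hdeg⟩ := Finset.exists_mem_eq_sup _ (support_nonempty.mpr hP)
    fun d : σ →₀ ℕ => d.sum fun _ e => e
  refine ne_of_apply_ne (coeff d) ?_
  rw [coeff_homogeneousComponent, if_pos (by exact hdeg.symm), coeff_zero]
  exact mem_support_iff.mp hd

theorem IsHomogeneous.aeval_mul_left {A : Type*} [CommSemiring A] [Algebra R A]
    {H : MvPolynomial σ R} {D : ℕ} (hH : H.IsHomogeneous D) (r : A) (x : σ → A) :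
    MvPolynomial.aeval (fun i => r * x i) H = r ^ D * MvPolynomial.aeval x H := by
  conv_lhs => rw [H.as_sum]
  conv_rhs => rw [H.as_sum]
  simp only [map_sum, aeval_monomial, Finset.mul_sum]
  refine Finset.sum_congr rfl fun d hd => ?_
  rw [hH.degree_eq_sum_deg_support hd, Finsupp.prod, Finsupp.prod, ← Finset.prod_pow_eq_pow_sum]
  simp only [mul_pow, Finset.prod_mul_distrib]
  ring

theorem IsHomogeneous.isAlgebraic_div {k K : Type*} [Field k] [Field K] [Algebra k K]
    {H : MvPolynomial (Fin 2) k} {D : ℕ} (hH : H.IsHomogeneous D) (hH0 : H ≠ 0)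
    {x : Fin 2 → K} (hx1 : x 1 ≠ 0) (hx : MvPolynomial.aeval x H = 0) :
    IsAlgebraic k (x 0 / x 1) := by
  refine ⟨MvPolynomial.aeval ![Polynomial.X, 1] H, fun h => hH0 ?_, ?_⟩
  · rw [← homogenize_eq_of_isHomogeneous hH rfl, h, homogenize_zero]
  · have hx' : x = fun i => x 1 * ![x 0 / x 1, 1] i := by
      ext i; fin_cases i <;> simp [mul_div_cancel₀ _ hx1]
    rw [hx', hH.aeval_mul_left, mul_eq_zero] at hx
    rw [← AlgHom.comp_apply, MvPolynomial.comp_aeval]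
    convert hx.resolve_left (pow_ne_zero _ hx1) using 2
    ext i; fin_cases i <;> simp

end MvPolynomial

theorem IsAlgClosed.mem_range_algebraMap_of_isAlgebraic {k K : Type*} [Field k] [IsAlgClosed k]
    [Field K] [Algebra k K] {t : K} (ht : IsAlgebraic k t) : t ∈ (algebraMap k K).range :=
  minpoly.mem_range_of_degree_eq_one k t
    (IsAlgClosed.degree_eq_one_of_irreducible k (minpoly.irreducible ht.isIntegral))

theorem isAlgebraic_leadingCoeff_div_of_aeval_eq_zero {k K : Type*} [Field k] [Field K]
    [Algebra k K] {u v : K[X]} (hv : v ≠ 0) (hdeg : u.degree = v.degree) (hdeg1 : 1 ≤ v.degree)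
    {P : MvPolynomial (Fin 2) k} (hP : P ≠ 0) (hPuv : MvPolynomial.aeval ![u, v] P = 0) :
    IsAlgebraic k (u.leadingCoeff / v.leadingCoeff) := by
  have hun : u.natDegree = v.natDegree := natDegree_eq_of_degree_eq hdeg
  have hn : 0 < v.natDegree := natDegree_pos_iff_degree_pos.mpr (zero_lt_one.trans_le hdeg1)
  have htop := MvPolynomial.coeff_aeval_eq_aeval_homogeneousComponent ![u, v] hn
    (fun i => by fin_cases i <;> simp [hun]) (le_refl P.totalDegree)
  rw [hPuv, coeff_zero] at htop
  refine (MvPolynomial.homogeneousComponent_isHomogeneous _ _).isAlgebraic_div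
    (MvPolynomial.homogeneousComponent_totalDegree_ne_zero hP)
    (x := ![u.leadingCoeff, v.leadingCoeff]) (by simpa using hv) ?_
  convert htop.symm using 2
  ext i; fin_cases i <;> simp [leadingCoeff, hun, -coeff_natDegree]

/-- Let `k` be an algebraically closed field, `K ⊇ k` a field, and `u, v ∈ K[s]` nonzero with
`deg u = deg v ≥ 1`.  If `u` and `v` are algebraically dependent over `k`, then there are
`α, β ∈ k`, not both zero, with `deg (αu + βv) < deg v`. -/
theorem exists_combination_degree_lt (k K : Type*) [Field k] [IsAlgClosed k]
    [Field K] [Algebra k K] (u v : Polynomial K) (hu : u ≠ 0) (hv : v ≠ 0)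
    (hdeg : u.degree = v.degree) (hdeg1 : 1 ≤ v.degree)
    (hdep : ¬ AlgebraicIndependent k ![u, v]) :
    ∃ α β : k, ¬(α = 0 ∧ β = 0) ∧
      (algebraMap k (Polynomial K) α * u + algebraMap k (Polynomial K) β * v).degree
        < v.degree := by
  obtain ⟨P, hPuv, hP⟩ : ∃ P, MvPolynomial.aeval ![u, v] P = 0 ∧ P ≠ 0 := by
    simpa [algebraicIndependent_iff] using hdep
  obtain ⟨c, hc⟩ := IsAlgClosed.mem_range_algebraMap_of_isAlgebraic
    (isAlgebraic_leadingCoeff_div_of_aeval_eq_zero hv hdeg hdeg1 hP hPuv)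
  refine ⟨1, -c, by simp, ?_⟩
  rw [map_one, one_mul, map_neg, neg_mul, ← sub_eq_add_neg, Polynomial.algebraMap_apply, hc]
  exact degree_sub_C_div_leadingCoeff_mul_lt hu hdeg
end

section
/- Let B be an integral domain of characteristic zero and let D be a locally nilpotent derivation of B. If f ∈ B satisfies Df ∈ fB (i.e., f divides Df), then Df = 0. -/
/-!
Let `deg a` be the largest `m` with `D^m a ≠ 0`. By the Leibniz rule, `D^(deg a + deg b) (a * b)`
is `C(deg a + deg b, deg a) • D^(deg a) a * D^(deg b) b`, which is nonzero in a domain of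
characteristic zero, so `deg (a * b) = deg a + deg b`. Hence `Df = f * b` with `f, b ≠ 0` would give
`deg (D f) = deg f + deg b ≥ deg f`, whereas `deg (D f) < deg f` for `D f ≠ 0`.
-/

open Finset

theorem iterate_eq_zero_of_le {M F : Type*} [Zero M] [FunLike F M M] [ZeroHomClass F M M]
    (f : F) {x : M} {k l : ℕ} (hk : (⇑f)^[k] x = 0) (hkl : k ≤ l) : (⇑f)^[l] x = 0 := by
  rw [← Nat.sub_add_cancel hkl, Function.iterate_add_apply, hk, iterate_map_zero]

theorem exists_iterate_ne_zero_and_iterate_succ_eq_zero {α : Type*} [Zero α] (g : α → α) {x : α}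
    (hx : x ≠ 0) (h : ∃ n, g^[n] x = 0) : ∃ m, g^[m] x ≠ 0 ∧ g^[m + 1] x = 0 := by
  classical
  obtain ⟨m, hm⟩ : ∃ m, Nat.find h = m + 1 :=
    Nat.exists_eq_succ_of_ne_zero fun h0 => hx (by simpa [h0] using Nat.find_spec h)
  exact ⟨m, Nat.find_min h (by omega), hm ▸ Nat.find_spec h⟩

namespace Derivation

variable {R A : Type*} [CommSemiring R] [CommSemiring A] [Algebra R A] (D : Derivation R A A)

theorem iterate_leibniz (a b : A) (n : ℕ) :
    (⇑D)^[n] (a * b) =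
      ∑ ij ∈ antidiagonal n, n.choose ij.1 • ((⇑D)^[ij.1] a * (⇑D)^[ij.2] b) := by
  induction n with
  | zero => simp
  | succ n ih =>
    rw [sum_antidiagonal_choose_succ_nsmul (fun i j => (⇑D)^[i] a * (⇑D)^[j] b),
      Function.iterate_succ_apply', ih, map_sum, add_comm, ← sum_add_distrib]
    refine sum_congr rfl fun ij hij => ?_
    rw [HasAntidiagonal.mem_antidiagonal] at hij
    rw [map_nsmul, leibniz, Nat.choose_symm_of_eq_add hij.symm, Function.iterate_succ_apply',
      Function.iterate_succ_apply', smul_eq_mul, smul_eq_mul]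
    ring

theorem iterate_add_mul_of_iterate_succ_eq_zero {a b : A} {m n : ℕ}
    (ha : (⇑D)^[m + 1] a = 0) (hb : (⇑D)^[n + 1] b = 0) :
    (⇑D)^[m + n] (a * b) = (m + n).choose m • ((⇑D)^[m] a * (⇑D)^[n] b) := by
  rw [iterate_leibniz, sum_eq_single (m, n)]
  · rintro ⟨i, j⟩ hij hne
    rw [HasAntidiagonal.mem_antidiagonal] at hij
    obtain hi | hj : m + 1 ≤ i ∨ n + 1 ≤ j := by
      by_contra! h
      exact hne (Prod.ext (by omega) (by omega))
    · rw [iterate_eq_zero_of_le D ha hi, zero_mul, smul_zero]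
    · rw [iterate_eq_zero_of_le D hb hj, mul_zero, smul_zero]
  · simp

theorem iterate_add_mul_ne_zero [NoZeroDivisors A] [CharZero A] {a b : A} {m n : ℕ}
    (ha : (⇑D)^[m] a ≠ 0) (ha' : (⇑D)^[m + 1] a = 0)
    (hb : (⇑D)^[n] b ≠ 0) (hb' : (⇑D)^[n + 1] b = 0) :
    (⇑D)^[m + n] (a * b) ≠ 0 := by
  rw [D.iterate_add_mul_of_iterate_succ_eq_zero ha' hb', nsmul_eq_mul]
  exact mul_ne_zero (Nat.cast_ne_zero.2 (Nat.choose_pos (by omega)).ne') (mul_ne_zero ha hb)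

end Derivation

/-- Let `B` be an integral domain of characteristic zero and let `D` be a locally nilpotent
derivation of `B`. If `f ∈ B` satisfies `Df ∈ fB` (i.e. `f` divides `Df`), then `Df = 0`. -/
theorem lnd_dvd_self_eq_zero {B : Type*} [CommRing B] [IsDomain B] [CharZero B]
    (D : Derivation ℤ B B) (hD : ∀ b : B, ∃ n : ℕ, (⇑D)^[n] b = 0)
    (f : B) (hf : ∃ b : B, D f = f * b) : D f = 0 := by
  by_contra hDf
  obtain ⟨b, hb⟩ := hf
  have hf0 : f ≠ 0 := by rintro rfl; exact hDf (map_zero D)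
  have hb0 : b ≠ 0 := by rintro rfl; exact hDf (by rw [hb, mul_zero])
  obtain ⟨m, hfm, hfm'⟩ := exists_iterate_ne_zero_and_iterate_succ_eq_zero D hf0 (hD f)
  obtain ⟨n, hbn, hbn'⟩ := exists_iterate_ne_zero_and_iterate_succ_eq_zero D hb0 (hD b)
  apply D.iterate_add_mul_ne_zero hfm hfm' hbn hbn'
  rw [← hb, ← Function.iterate_succ_apply]
  exact iterate_eq_zero_of_le D hfm' (by omega)
end

section
/- Let B be an integral domain containing ℚ and let D be a nonzero locally nilpotent derivation of B with kernel A = ker D. Then A is algebraically closed in B (every element of B that is algebraic over A lies in A), and tr.deg_A B = 1 (the fraction field of B has transcendence degree one over the fraction field of A). -/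
/-!
If `p(b) = 0` for a nonzero `p ∈ A[X]` of minimal degree, then `0 = D (p(b)) = p'(b) D b` with
`p'(b) ≠ 0`, so `D b = 0`: the kernel is algebraically closed.

A nonzero locally nilpotent `D` has a local slice `r` (`D r ≠ 0`, `D² r = 0`). Since `A[X]` has
antiderivatives over `ℚ`, induction on the nilpotency order of `b` gives `(D r)^N b ∈ A[r]`, so
`Frac B = (Frac A)(r)`; and `r` is transcendental over `A` by the first part, as `D r ≠ 0`.
-/

/-- The kernel of a derivation, as a subalgebra. -/
def Derivation.kerSubalgebra {R B : Type*} [CommRing R] [CommRing B] [Algebra R B]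
    (D : Derivation R B B) : Subalgebra R B where
  carrier := {b : B | D b = 0}
  add_mem' := by
    intro a b ha hb
    simp only [Set.mem_setOf_eq] at *
    rw [map_add, ha, hb, add_zero]
  mul_mem' := by
    intro a b ha hb
    simp only [Set.mem_setOf_eq] at *
    rw [D.leibniz, ha, hb, smul_zero, smul_zero, add_zero]
  algebraMap_mem' := by intro r; simp

/-- The transcendence degree of an `R`-algebra `A`: the supremum of the cardinalities of
algebraically independent subsets of `A` over `R`. -/
noncomputable def trdeg (R A : Type*) [CommRing R] [CommRing A] [Algebra R A] : Cardinal :=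
  ⨆ s : { s : Set A // AlgebraicIndependent R ((↑) : s → A) }, Cardinal.mk s.1

open Polynomial

lemma Polynomial.derivative_surjective {A : Type*} [CommRing A] [Algebra ℚ A] :
    Function.Surjective (derivative : A[X] → A[X]) := by
  intro p
  induction p using Polynomial.induction_on' with
  | add p q hp hq =>
    obtain ⟨p', rfl⟩ := hp
    obtain ⟨q', rfl⟩ := hq
    exact ⟨p' + q', derivative_add⟩
  | monomial n a =>
    refine ⟨monomial (n + 1) (((n : ℚ) + 1)⁻¹ • a), ?_⟩
    rw [derivative_monomial, Nat.add_sub_cancel, Algebra.smul_def]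
    congr 1
    have hn : ((n + 1 : ℕ) : A) = algebraMap ℚ A ((n : ℚ) + 1) := by simp
    rw [mul_comm, ← mul_assoc, hn, ← map_mul, mul_inv_cancel₀ (by positivity), map_one,
      one_mul]

lemma IntermediateField.eq_top_of_forall_algebraMap_mem {B F L : Type*} [CommRing B] [Field F]
    [Field L] [Algebra B L] [IsFractionRing B L] [Algebra F L] (K : IntermediateField F L)
    (h : ∀ b : B, algebraMap B L b ∈ K) : K = ⊤ :=
  eq_top_iff.2 fun z _ => by
    obtain ⟨x, y, -, rfl⟩ := IsFractionRing.div_surjective B z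
    exact div_mem (h x) (h y)

open IntermediateField in
lemma Algebra.trdeg_eq_one_of_adjoin_eq_top {F L : Type*} [Field F] [Field L] [Algebra F L]
    {t : L} (ht : Transcendental F t) (htop : F⟮t⟯ = ⊤) : Algebra.trdeg F L = 1 := by
  have hbasis : IsTranscendenceBasis F (fun _ : Unit => t) := by
    refine isTranscendenceBasis_iff_algebraicIndependent_isAlgebraic.2
      ⟨algebraicIndependent_unique_type_iff.2 ht, ?_⟩
    rw [Set.range_const, ← isAlgebraic_adjoin_iff_top, htop]
    infer_instance
  simpa using hbasis.lift_cardinalMk_eq_trdeg.symm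

namespace Derivation

section

variable {R B : Type*} [CommRing R] [CommRing B] [Algebra R B]

def overKer (D : Derivation R B B) : Derivation D.kerSubalgebra B B where
  toFun := D
  map_add' := D.map_add
  map_smul' a b := by
    rw [Subalgebra.smul_def, smul_eq_mul, D.leibniz, a.2, smul_zero, add_zero]; rfl
  map_one_eq_zero' := D.map_one_eq_zero
  leibniz' := D.leibniz

lemma apply_eq_zero_of_isAlgebraic {A : Type*} [CommRing A] [Algebra A B] [IsDomain B]
    [FaithfulSMul A B] [IsAddTorsionFree A] (D : Derivation A B B) {b : B}
    (hb : IsAlgebraic A b) : D b = 0 := by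
  by_contra hDb
  obtain ⟨p, hp, hpb⟩ := hb
  induction hn : p.natDegree using Nat.strong_induction_on generalizing p with
  | _ n ih =>
    have hdeg : p.natDegree ≠ 0 := by
      intro h0
      rw [eq_C_of_natDegree_eq_zero h0, aeval_C,
        FaithfulSMul.algebraMap_eq_zero_iff] at hpb
      exact hp (by rw [eq_C_of_natDegree_eq_zero h0, hpb, C_0])
    have hp' : derivative p ≠ 0 := mt derivative_eq_zero.1 hdeg
    have hp'b : aeval b (derivative p) = 0 := by
      have h := D.map_aeval p b
      rw [hpb, map_zero, smul_eq_mul] at h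
      exact (mul_eq_zero.1 h.symm).resolve_right hDb
    exact ih _ (hn ▸ natDegree_derivative_lt hdeg) _ hp' hp'b rfl

lemma mem_kerSubalgebra_of_isAlgebraic [IsDomain B] [Algebra ℚ B] (D : Derivation ℚ B B)
    {b : B} (hb : IsAlgebraic D.kerSubalgebra b) : b ∈ D.kerSubalgebra :=
  have : IsAddTorsionFree D.kerSubalgebra := .of_module_rat _
  D.overKer.apply_eq_zero_of_isAlgebraic hb

lemma exists_apply_ne_zero_apply_apply_eq_zero (D : Derivation R B B)
    (hln : ∀ b : B, ∃ n : ℕ, (⇑D)^[n] b = 0) (hD : D ≠ 0) :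
    ∃ r, D r ≠ 0 ∧ D (D r) = 0 := by
  classical
  obtain ⟨b, hb⟩ : ∃ b, D b ≠ 0 := by
    by_contra! h
    exact hD (Derivation.ext h)
  have hex : ∃ n, (⇑D)^[n] (D b) = 0 := hln (D b)
  obtain ⟨n, hn⟩ : ∃ n, Nat.find hex = n + 1 :=
    Nat.exists_eq_add_one.2 <| Nat.pos_of_ne_zero fun h =>
      hb (by simpa [h] using Nat.find_spec hex)
  refine ⟨(⇑D)^[n] b, ?_, ?_⟩
  · rw [← Function.iterate_succ_apply' D, Function.iterate_succ_apply]
    exact Nat.find_min hex (by omega)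
  · rw [← Function.iterate_succ_apply' D, ← Function.iterate_succ_apply' D,
      Function.iterate_succ_apply, ← hn]
    exact Nat.find_spec hex

lemma exists_pow_mul_eq_aeval [Algebra ℚ B] (D : Derivation ℚ B B) {r : B} (hr : D (D r) = 0)
    {n : ℕ} {b : B} (hb : (⇑D)^[n] b = 0) :
    ∃ (N : ℕ) (p : D.kerSubalgebra[X]), D r ^ N * b = aeval r p := by
  induction n generalizing b with
  | zero => exact ⟨0, 0, by simpa using hb⟩
  | succ n ih =>
    obtain ⟨N, p, hp⟩ := ih (b := D b) hb
    obtain ⟨q, rfl⟩ := Polynomial.derivative_surjective p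
    have hDq : D (aeval r q) = aeval r (derivative q) * D r := D.overKer.map_aeval q r
    have hpow : D (D r ^ (N + 1)) = 0 := pow_mem (S := D.kerSubalgebra) hr _
    have hc : D (D r ^ (N + 1) * b - aeval r q) = 0 := by
      rw [map_sub, hDq, ← hp, D.leibniz, hpow, smul_zero, add_zero, smul_eq_mul]
      ring
    exact ⟨N + 1, q + C ⟨_, hc⟩, by rw [map_add, aeval_C]; exact (add_sub_cancel _ _).symm⟩

end

section

open IntermediateField

-- `D.kerSubalgebra` acts on `FB` through `B`, so the tower hypothesis says that `FA → FB`
-- extends `D.kerSubalgebra → B → FB`.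
variable {B : Type*} [CommRing B] [Algebra ℚ B] {D : Derivation ℚ B B}
  {FA FB : Type*} [Field FA] [Field FB] [Algebra D.kerSubalgebra FA] [Algebra B FB]
  [IsFractionRing B FB] [Algebra FA FB] [IsScalarTower D.kerSubalgebra FA FB]

lemma transcendental_algebraMap_of_apply_ne_zero [IsDomain B]
    [IsFractionRing D.kerSubalgebra FA] {r : B} (hr : D r ≠ 0) :
    Transcendental FA (algebraMap B FB r) := by
  have hrA : Transcendental D.kerSubalgebra r := fun h =>
    hr (D.mem_kerSubalgebra_of_isAlgebraic h)
  exact (IsFractionRing.isAlgebraic_iff D.kerSubalgebra FA FB).not.1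
    ((transcendental_algebraMap_iff (IsFractionRing.injective B FB)).2 hrA)

lemma adjoin_algebraMap_eq_top (hln : ∀ b : B, ∃ n : ℕ, (⇑D)^[n] b = 0) {r : B}
    (hr : D r ≠ 0) (hrr : D (D r) = 0) : FA⟮algebraMap B FB r⟯ = ⊤ := by
  refine eq_top_of_forall_algebraMap_mem (B := B) _ fun b => ?_
  have hK (p : D.kerSubalgebra[X]) : algebraMap B FB (aeval r p) ∈ FA⟮algebraMap B FB r⟯ := by
    rw [← aeval_algebraMap_apply]
    exact Algebra.adjoin_le
      (S := FA⟮algebraMap B FB r⟯.toSubalgebra.restrictScalars D.kerSubalgebra)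
      (Set.singleton_subset_iff.2 (mem_adjoin_simple_self FA _)) (aeval_mem_adjoin_singleton _ _)
  obtain ⟨n, hn⟩ := hln b
  obtain ⟨N, p, hp⟩ := D.exists_pow_mul_eq_aeval hrr hn
  have hs : algebraMap B FB (D r) ≠ 0 := (map_ne_zero_iff _ (IsFractionRing.injective B FB)).2 hr
  have hb : algebraMap B FB b = algebraMap B FB (aeval r p) / algebraMap B FB (D r) ^ N := by
    rw [← hp, map_mul, map_pow, mul_div_cancel_left₀ _ (pow_ne_zero _ hs)]
  rw [hb]
  exact div_mem (hK p) (pow_mem (by simpa using hK (C ⟨D r, hrr⟩)) N)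

end

end Derivation

theorem kernel_algebraically_closed_and_trdeg_one_general (B : Type*) [CommRing B] [IsDomain B]
    [Algebra ℚ B] (D : Derivation ℚ B B)
    (hln : ∀ b : B, ∃ n : ℕ, (⇑D)^[n] b = 0) (hD : D ≠ 0)
    (FA FB : Type*) [Field FA] [Field FB]
    [Algebra ↥D.kerSubalgebra FA] [IsFractionRing ↥D.kerSubalgebra FA]
    [Algebra B FB] [IsFractionRing B FB]
    [Algebra FA FB]
    [IsScalarTower ↥D.kerSubalgebra FA FB] :
    (∀ b : B, IsAlgebraic ↥D.kerSubalgebra b → b ∈ D.kerSubalgebra) ∧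
    trdeg FA FB = 1 := by
  refine ⟨fun b => D.mem_kerSubalgebra_of_isAlgebraic, ?_⟩
  obtain ⟨r, hr, hrr⟩ := D.exists_apply_ne_zero_apply_apply_eq_zero hln hD
  exact Algebra.trdeg_eq_one_of_adjoin_eq_top
    (Derivation.transcendental_algebraMap_of_apply_ne_zero hr)
    (Derivation.adjoin_algebraMap_eq_top hln hr hrr)

/-- Let `B` be a domain containing `ℚ` and `D` a nonzero locally nilpotent derivation of `B`
with kernel `A`.  Then `A` is algebraically closed in `B`, and `tr.deg_A B = 1`, i.e. the
fraction field `FB` of `B` has transcendence degree one over the fraction field `FA`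
of `A`. -/
theorem kernel_algebraically_closed_and_trdeg_one (B : Type*) [CommRing B] [IsDomain B]
    [Algebra ℚ B] (D : Derivation ℚ B B)
    (hln : ∀ b : B, ∃ n : ℕ, (⇑D)^[n] b = 0) (hD : D ≠ 0)
    (FA FB : Type*) [Field FA] [Field FB]
    [Algebra ↥D.kerSubalgebra FA] [IsFractionRing ↥D.kerSubalgebra FA]
    [Algebra B FB] [IsFractionRing B FB]
    [Algebra FA FB] [Algebra ↥D.kerSubalgebra FB]
    [IsScalarTower ↥D.kerSubalgebra FA FB] [IsScalarTower ↥D.kerSubalgebra B FB] :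
    (∀ b : B, IsAlgebraic ↥D.kerSubalgebra b → b ∈ D.kerSubalgebra) ∧
    trdeg FA FB = 1 :=
  kernel_algebraically_closed_and_trdeg_one_general B D hln hD FA FB
end
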